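/- Let G be a compact Lie group with Lie algebra 𝔤 and G_X the adjoint stabilizer of X. Suppose (V₁, V₂, a, b, X) satisfies: all entries of V₁, V₂ lie in G_X, a, b ∈ G_X, and 𝔪(V₁)·𝔪(V₂)·[a,b] = exp(X). Set d = a^{-1}, d̄ = a·exp(-X/2)·𝔪(V₁), c = a^{-1}, c̄ = a·b. Then 𝔪(V₁) = exp(X/2)·c·d̄·c^{-1}·d and 𝔪(𝔯(V₂)) = c̄·d·exp(-X/2)·c̄^{-1}·d̄. -/

import Mathlib

/-- Abstraction of a Lie group `G` with Lie algebra `𝔤`, exponential map `exp`,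
and adjoint representation `Ad`, satisfying the standard identities
`exp (Ad g X) = g * exp X * g⁻¹` and one-parameter subgroup additivity. -/
structure LieExpAd (G 𝔤 : Type*) [Group G] [TopologicalSpace G]
    [AddCommGroup 𝔤] [Module ℝ 𝔤] where
  exp : 𝔤 → G
  Ad : G →* (𝔤 ≃ₗ[ℝ] 𝔤)
  exp_Ad : ∀ (g : G) (X : 𝔤), exp (Ad g X) = g * exp X * g⁻¹
  exp_add_smul : ∀ (r s : ℝ) (X : 𝔤), exp ((r + s) • X) = exp (r • X) * exp (s • X)

open scoped commutatorElement

variable {G 𝔤 : Type*} [Group G] [TopologicalSpace G] [IsTopologicalGroup G]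
  [AddCommGroup 𝔤] [Module ℝ 𝔤]

/-- `𝔪(a₁,b₁,…,a_ℓ,b_ℓ) = ∏ᵢ [aᵢ,bᵢ]` (ordered product of commutators). -/
def mm {ℓ : ℕ} (V : Fin ℓ → G × G) : G :=
  (List.ofFn fun i => ⁅(V i).1, (V i).2⁆).prod

/-- `𝔯(a₁,b₁,…,a_ℓ,b_ℓ) = (b_ℓ,a_ℓ,…,b₁,a₁)`. -/
def rr {ℓ : ℕ} (V : Fin ℓ → G × G) : Fin ℓ → G × G :=
  fun i => ((V i.rev).2, (V i.rev).1)

/-- Entrywise conjugation `g V g⁻¹` of a tuple. -/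
def conjT {ℓ : ℕ} (g : G) (V : Fin ℓ → G × G) : Fin ℓ → G × G :=
  fun i => (g * (V i).1 * g⁻¹, g * (V i).2 * g⁻¹)

/-- The adjoint stabilizer `G_X = {g | Ad(g)X = X}`. -/
def stab (L : LieExpAd G 𝔤) (X : 𝔤) : Set G := {g | L.Ad g X = X}

/-- All entries of the tuple `V` lie in `G_X`. -/
def tupleStab (L : LieExpAd G 𝔤) (X : 𝔤) {ℓ : ℕ} (V : Fin ℓ → G × G) : Prop :=
  ∀ i, (V i).1 ∈ stab L X ∧ (V i).2 ∈ stab L X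

/-- Membership in the symmetric representation variety `Z^{ℓ,1}_{YM}(G)`. -/
def memZ1 (L : LieExpAd G 𝔤) {ℓ : ℕ} (V : Fin ℓ → G × G) (c : G)
    (Vb : Fin ℓ → G × G) (cb : G) (X : 𝔤) : Prop :=
  tupleStab L X V ∧ tupleStab L X (conjT c Vb) ∧
  mm V = L.exp ((1/2 : ℝ) • X) * (c * cb) ∧
  mm Vb = cb * L.exp (-((1/2 : ℝ) • X)) * c

/-- Membership in the symmetric representation variety `Z^{ℓ,2}_{YM}(G)`. -/
def memZ2 (L : LieExpAd G 𝔤) {ℓ : ℕ} (V : Fin ℓ → G × G) (d c : G)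
    (Vb : Fin ℓ → G × G) (db cb : G) (X : 𝔤) : Prop :=
  tupleStab L X V ∧ tupleStab L X (conjT (d⁻¹ * c) Vb) ∧
  d⁻¹ ∈ stab L X ∧ c * cb ∈ stab L X ∧
  mm V = L.exp ((1/2 : ℝ) • X) * (c * db * c⁻¹ * d) ∧
  mm Vb = cb * d * L.exp (-((1/2 : ℝ) • X)) * cb⁻¹ * db

/-! Since `𝔪(𝔯(V)) = 𝔪(V)⁻¹`, the relation `𝔪(V₁)𝔪(V₂)[a,b] = exp X` gives
`𝔪(𝔯(V₂)) = [a,b] · exp(-X/2) · exp(-X/2) · 𝔪(V₁)`; as `b ∈ G_X` commutes with `exp(-X/2)`,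
this is `c̄ · d · exp(-X/2) · c̄⁻¹ · d̄`. The first identity is immediate from `exp(-X/2) = exp(X/2)⁻¹`. -/

theorem List.ofFn_comp_rev {α : Type*} {n : ℕ} (f : Fin n → α) :
    (List.ofFn fun i => f i.rev) = (List.ofFn f).reverse := by
  refine List.ext_getElem (by simp) fun i _ _ => ?_
  simp only [List.getElem_ofFn, List.getElem_reverse]
  congr 1
  ext
  simp only [Fin.val_rev, List.length_ofFn]
  omega

omit [TopologicalSpace G] [IsTopologicalGroup G] in
theorem mm_rr {ℓ : ℕ} (V : Fin ℓ → G × G) : mm (rr V) = (mm V)⁻¹ := by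
  simp only [mm, rr, List.prod_inv_reverse, List.map_ofFn, ← List.ofFn_comp_rev,
    Function.comp_def, commutatorElement_inv]

namespace LieExpAd

omit [IsTopologicalGroup G]

variable (L : LieExpAd G 𝔤)

theorem exp_zero_smul (X : 𝔤) : L.exp ((0 : ℝ) • X) = 1 := by
  rw [← mul_eq_left (a := L.exp ((0 : ℝ) • X)), ← L.exp_add_smul, add_zero]

theorem exp_neg_smul (r : ℝ) (X : 𝔤) : L.exp (-(r • X)) = (L.exp (r • X))⁻¹ := by
  rw [← neg_smul, eq_inv_iff_mul_eq_one, ← L.exp_add_smul, neg_add_cancel, exp_zero_smul]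

theorem exp_eq_exp_half_smul_mul_self (X : 𝔤) :
    L.exp X = L.exp ((1/2 : ℝ) • X) * L.exp ((1/2 : ℝ) • X) := by
  rw [← L.exp_add_smul]
  norm_num

theorem commute_exp_smul_of_mem_stab {X : 𝔤} {g : G} (hg : g ∈ stab L X) (r : ℝ) :
    Commute g (L.exp (r • X)) := by
  have h := L.exp_Ad g (r • X)
  rw [map_smul, hg] at h
  exact mul_inv_eq_iff_eq_mul.mp h.symm

end LieExpAd

theorem ym_into_phi2_image_general (L : LieExpAd G 𝔤) {ℓ : ℕ}
    (V₁ V₂ : Fin ℓ → G × G) (a b : G) (X : 𝔤)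
    (hb : b ∈ stab L X)
    (hm : mm V₁ * mm V₂ * ⁅a, b⁆ = L.exp X) :
    mm V₁ = L.exp ((1/2 : ℝ) • X) *
        (a⁻¹ * (a * L.exp (-((1/2 : ℝ) • X)) * mm V₁) * (a⁻¹)⁻¹ * a⁻¹) ∧
    mm (rr V₂) = (a * b) * a⁻¹ * L.exp (-((1/2 : ℝ) • X)) * (a * b)⁻¹ *
        (a * L.exp (-((1/2 : ℝ) • X)) * mm V₁) := by
  rw [L.exp_neg_smul]
  set E := L.exp ((1/2 : ℝ) • X)
  refine ⟨by group, ?_⟩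
  have hV₂ : mm V₂ = (mm V₁)⁻¹ * (E * E) * ⁅a, b⁆⁻¹ := by
    rw [← L.exp_eq_exp_half_smul_mul_self, ← hm]
    group
  have hbE : Commute b⁻¹ E⁻¹ := (L.commute_exp_smul_of_mem_stab hb _).inv_inv
  rw [mm_rr, hV₂, commutatorElement_def]
  calc ((mm V₁)⁻¹ * (E * E) * (a * b * a⁻¹ * b⁻¹)⁻¹)⁻¹
      = a * b * a⁻¹ * (b⁻¹ * E⁻¹) * E⁻¹ * mm V₁ := by group
    _ = a * b * a⁻¹ * (E⁻¹ * b⁻¹) * E⁻¹ * mm V₁ := by rw [hbE.eq]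
    _ = a * b * a⁻¹ * E⁻¹ * (a * b)⁻¹ * (a * E⁻¹ * mm V₁) := by group

/-- given `(V₁,V₂,a,b,X) ∈ X^{2ℓ+1,0}_{YM}(G)`-type data, with
`d = a⁻¹`, `d̄ = a·exp(-X/2)·𝔪(V₁)`, `c = a⁻¹`, `c̄ = a·b`, one has
`𝔪(V₁) = exp(X/2)·c·d̄·c⁻¹·d` and `𝔪(𝔯(V₂)) = c̄·d·exp(-X/2)·c̄⁻¹·d̄`. -/
theorem ym_into_phi2_image [CompactSpace G] (L : LieExpAd G 𝔤) {ℓ : ℕ}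
    (V₁ V₂ : Fin ℓ → G × G) (a b : G) (X : 𝔤)
    (h1 : tupleStab L X V₁) (h2 : tupleStab L X V₂)
    (ha : a ∈ stab L X) (hb : b ∈ stab L X)
    (hm : mm V₁ * mm V₂ * ⁅a, b⁆ = L.exp X) :
    mm V₁ = L.exp ((1/2 : ℝ) • X) *
        (a⁻¹ * (a * L.exp (-((1/2 : ℝ) • X)) * mm V₁) * (a⁻¹)⁻¹ * a⁻¹) ∧
    mm (rr V₂) = (a * b) * a⁻¹ * L.exp (-((1/2 : ℝ) • X)) * (a * b)⁻¹ *
        (a * L.exp (-((1/2 : ℝ) • X)) * mm V₁) :=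
  ym_into_phi2_image_general L V₁ V₂ a b X hb hm
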